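/- If the labelled existential dependency graph ledgraph(Σ) is acyclic, then Chase(Σ,D) is finite for every database D. -/

import Mathlib

/- Formalization of the framework of "Chase Termination Beyond Polynomial Time":
   terms, atoms, tgds, the Datalog-first standard chase, the labelled existential
   dependency graph, path queries, propagation, saturation, ranks, and term trees. -/

namespace ChasePaper

/-- Terms built from countably many constants, variables, and nulls. -/
inductive Term : Type
  | const : ℕ → Term
  | var : ℕ → Term
  | null : ℕ → Term
  deriving DecidableEq

/-- Atoms: a predicate applied to a list of terms (the arity of the predicate
being the length of the argument list). -/
structure Atom : Type where
  pred : ℕ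
  args : List Term
  deriving DecidableEq

def Atom.vars (a : Atom) : Set ℕ := { x | Term.var x ∈ a.args }

/-- Application of a substitution (acting on variables) to a term. -/
def Term.subst (σ : ℕ → Term) : Term → Term
  | Term.var x => σ x
  | t => t

def Atom.subst (σ : ℕ → Term) (a : Atom) : Atom := ⟨a.pred, a.args.map (Term.subst σ)⟩

/-- A substitution is ground if it never yields a variable. -/
def GroundSub (σ : ℕ → Term) : Prop := ∀ x y : ℕ, σ x ≠ Term.var y

/-- A tuple-generating dependency `B[x,y] → ∃v. H[y,v]`, represented by its body
and head; universal, frontier, and existential variables are derived. -/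
structure TGD : Type where
  body : Finset Atom
  head : Finset Atom
  deriving DecidableEq

def TGD.bodyVars (ρ : TGD) : Set ℕ := { x | ∃ a ∈ ρ.body, x ∈ a.vars }
def TGD.headVars (ρ : TGD) : Set ℕ := { x | ∃ a ∈ ρ.head, x ∈ a.vars }
/-- the frontier variables `y⃗` -/
def TGD.frontier (ρ : TGD) : Set ℕ := ρ.bodyVars ∩ ρ.headVars
/-- the existentially quantified variables `v⃗` -/
def TGD.exVars (ρ : TGD) : Set ℕ := ρ.headVars \ ρ.bodyVars
def TGD.allVars (ρ : TGD) : Set ℕ := ρ.bodyVars ∪ ρ.headVars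
def TGD.isDatalog (ρ : TGD) : Prop := ρ.exVars = ∅

/-- `σ` is a match of the body of `ρ` in `I`. -/
def BodyMatch (I : Set Atom) (ρ : TGD) (σ : ℕ → Term) : Prop :=
  GroundSub σ ∧ ∀ a ∈ ρ.body, a.subst σ ∈ I

/-- The match `σ` of `ρ` is satisfied in `I`. -/
def MatchSatisfied (I : Set Atom) (ρ : TGD) (σ : ℕ → Term) : Prop :=
  ∃ σ' : ℕ → Term, GroundSub σ' ∧ (∀ x ∈ ρ.bodyVars, σ' x = σ x) ∧
    ∀ a ∈ ρ.head, a.subst σ' ∈ I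

def SatTGD (I : Set Atom) (ρ : TGD) : Prop := ∀ σ, BodyMatch I ρ σ → MatchSatisfied I ρ σ

/-- A database: a finite set of variable-free, null-free atoms. -/
def IsDatabase (D : Set Atom) : Prop :=
  D.Finite ∧ ∀ a ∈ D, ∀ t ∈ a.args, ∃ c : ℕ, t = Term.const c

def termsOf (I : Set Atom) : Set Term := { t | ∃ a ∈ I, t ∈ a.args }

/-- Data of a single chase step: the applied tgd, the match, and the extended match. -/
structure Step : Type where
  rule : TGD
  m : ℕ → Term
  mx : ℕ → Term

/-- A Datalog-first standard chase sequence for the tgd set `S` and database `D`. -/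
structure ChaseSeq (S : Finset TGD) (D : Set Atom) : Type where
  seq : ℕ → Set Atom
  step : ℕ → Option Step
  init : seq 0 = D
  app : ∀ i st, step i = some st →
    st.rule ∈ S ∧
    BodyMatch (seq i) st.rule st.m ∧
    ¬ MatchSatisfied (seq i) st.rule st.m ∧
    (∀ x ∈ st.rule.bodyVars, st.mx x = st.m x) ∧
    (∀ v ∈ st.rule.exVars, ∃ n : ℕ, st.mx v = Term.null n ∧ Term.null n ∉ termsOf (seq i)) ∧
    (∀ v ∈ st.rule.exVars, ∀ w ∈ st.rule.exVars, st.mx v = st.mx w → v = w) ∧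
    seq (i + 1) = seq i ∪ { a | ∃ b ∈ st.rule.head, a = b.subst st.mx } ∧
    (st.rule.exVars ≠ ∅ → ∀ ρ ∈ S, ρ.isDatalog → SatTGD (seq i) ρ)
  halt : ∀ i, step i = none → seq (i + 1) = seq i ∧ ∀ ρ ∈ S, SatTGD (seq i) ρ
  fair : ∀ i, ∀ ρ ∈ S, ∀ σ, BodyMatch (seq i) ρ σ → ∃ j, i < j ∧ MatchSatisfied (seq j) ρ σ

def chase {S : Finset TGD} {D : Set Atom} (cs : ChaseSeq S D) : Set Atom := ⋃ i, cs.seq i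

def chaseTerms {S : Finset TGD} {D : Set Atom} (cs : ChaseSeq S D) : Set Term :=
  termsOf (chase cs)

/-- The null `n` is introduced at step `i` (with step data `st`) as the fresh value of
the existential variable `v`. -/
def IntroducedAt {S : Finset TGD} {D : Set Atom} (cs : ChaseSeq S D) (n i : ℕ) (st : Step)
    (v : ℕ) : Prop :=
  cs.step i = some st ∧ v ∈ st.rule.exVars ∧ st.mx v = Term.null n

/-- `var(n) = v`. -/
def NullVar {S : Finset TGD} {D : Set Atom} (cs : ChaseSeq S D) (n v : ℕ) : Prop :=
  ∃ i st, IntroducedAt cs n i st v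

/-- Chase edge `t →_y n`. -/
def ChaseEdge {S : Finset TGD} {D : Set Atom} (cs : ChaseSeq S D) (t : Term) (y n : ℕ) : Prop :=
  ∃ i st v, IntroducedAt cs n i st v ∧ y ∈ st.rule.frontier ∧ st.m y = t

/-- The variables of the tgds in `S` are renamed apart. -/
def RenamedApart (S : Finset TGD) : Prop :=
  ∀ ρ₁ ∈ S, ∀ ρ₂ ∈ S, ρ₁ ≠ ρ₂ → ρ₁.allVars ∩ ρ₂.allVars = ∅

/-- A predicate position `⟨p, i⟩`. -/
abbrev Pos := ℕ × ℕ

def posIn (x : ℕ) (A : Finset Atom) : Set Pos :=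
  { pq | ∃ a ∈ A, a.pred = pq.1 ∧ a.args[pq.2]? = some (Term.var x) }

/-- positions of `x` in the body of `ρ` -/
def posB (ρ : TGD) (x : ℕ) : Set Pos := posIn x ρ.body
/-- positions of `x` in the head of `ρ` -/
def posH (ρ : TGD) (x : ℕ) : Set Pos := posIn x ρ.head

/-- `Ω_v` for the existential variable `v` of the tgd `ρv`: the smallest set of positions
containing `posH ρv v` and closed under propagation through universal variables. -/
inductive Omega (S : Finset TGD) (ρv : TGD) (v : ℕ) : Pos → Prop
  | base : ∀ {pq}, pq ∈ posH ρv v → Omega S ρv v pq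
  | step : ∀ {ρ : TGD} {x : ℕ} {pq}, ρ ∈ S → x ∈ ρ.bodyVars →
      (∀ q ∈ posB ρ x, Omega S ρv v q) → pq ∈ posH ρ x → Omega S ρv v pq

/-- `v` is a vertex of `ledgraph(S)`. -/
def LVertex (S : Finset TGD) (v : ℕ) : Prop := ∃ ρ ∈ S, v ∈ ρ.exVars

/-- Edge `v →_y w` of the labelled existential dependency graph `ledgraph(S)`. -/
def LEdge (S : Finset TGD) (v y w : ℕ) : Prop :=
  ∃ ρv ∈ S, ∃ ρw ∈ S, v ∈ ρv.exVars ∧ w ∈ ρw.exVars ∧ y ∈ ρw.frontier ∧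
    ∀ pq ∈ posB ρw y, Omega S ρv v pq

def LEdgeAny (S : Finset TGD) (v w : ℕ) : Prop := ∃ y, LEdge S v y w

/-- `ledgraph(S)` is acyclic. -/
def LAcyclic (S : Finset TGD) : Prop := ∀ v, ¬ Relation.TransGen (LEdgeAny S) v v

def LReach (S : Finset TGD) : ℕ → ℕ → Prop := Relation.ReflTransGen (LEdgeAny S)

/-- The strongly connected component of `v` in `ledgraph(S)`. -/
def scc (S : Finset TGD) (v : ℕ) : Set ℕ := { u | LReach S u v ∧ LReach S v u }

/-- A path `v₀ →_{y₁} v₁ →_{y₂} ⋯ →_{y_len} v_len` in `ledgraph(S)`, together with,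
for each `1 ≤ i ≤ len`, the tgd of the vertex `v_i`. -/
structure LPath (S : Finset TGD) : Type where
  len : ℕ
  vtx : ℕ → ℕ
  lab : ℕ → ℕ
  tgd : ℕ → TGD
  edge : ∀ i, 1 ≤ i → i ≤ len → LEdge S (vtx (i - 1)) (lab i) (vtx i)
  mem : ∀ i, 1 ≤ i → i ≤ len → tgd i ∈ S ∧ vtx i ∈ (tgd i).exVars ∧ lab i ∈ (tgd i).frontier

/-- The renamed variable `ỹ_j` of the path query: `ỹ_j` is the copy of the frontier
variable `y_j` in the `j`-th copied tgd, and `ỹ_{len+1}` is a fresh variable. -/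
def ytil {S : Finset TGD} (p : LPath S) (j : ℕ) : ℕ :=
  if j ≤ p.len then Nat.pair j (p.lab j) else Nat.pair j 0

/-- Renaming of the variables of the `i`-th copied tgd (body). -/
def bodyRen (i : ℕ) : ℕ → Term := fun x => Term.var (Nat.pair i x)

/-- Renaming of the variables of the `i`-th copied tgd (head), where the existential
variable `v_i` is replaced by `ỹ_{i+1}`. -/
def headRen {S : Finset TGD} (p : LPath S) (i : ℕ) : ℕ → Term :=
  fun x => if x = p.vtx i then Term.var (ytil p (i + 1)) else Term.var (Nat.pair i x)

/-- The atoms of the conjunctive query `Path(𝔭) = ⋀ᵢ (Bᵢ ∧ Hᵢ[ṽᵢ/ỹᵢ₊₁])`. -/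
def pathAtoms {S : Finset TGD} (p : LPath S) : Set Atom :=
  { a | ∃ i, 1 ≤ i ∧ i ≤ p.len ∧
      ((∃ b ∈ (p.tgd i).body, a = b.subst (bodyRen i)) ∨
       (∃ b ∈ (p.tgd i).head, a = b.subst (headRen p i))) }

/-- The Datalog rules of `S` entail the rule `B → H` (all variables of `H` occur in `B`). -/
def DatalogEntails (S : Finset TGD) (B H : Set Atom) : Prop :=
  ∀ I : Set Atom, (∀ ρ ∈ S, ρ.isDatalog → SatTGD I ρ) →
    ∀ σ : ℕ → Term, GroundSub σ → (∀ a ∈ B, a.subst σ ∈ I) → ∀ a ∈ H, a.subst σ ∈ I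

/-- Substitution producing `H*[ỹ_{ℓ+1}, z̃⃗₁, ỹ₂, w̃⃗₁]` from the head of the first tgd
of the path. -/
def basePropSub {S : Finset TGD} (p : LPath S) : ℕ → Term :=
  fun x =>
    if x = p.lab 1 then Term.var (ytil p (p.len + 1))
    else if x = p.vtx 1 then Term.var (ytil p 2)
    else Term.var (Nat.pair 1 x)

/-- The path `𝔭` (starting with an edge `u* →_{y*} v*`) is base-propagating. -/
def BasePropagating {S : Finset TGD} (p : LPath S) : Prop :=
  DatalogEntails S (pathAtoms p) { a | ∃ b ∈ (p.tgd 1).head, a = b.subst (basePropSub p) }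

/-- Substitution producing `H*[ỹ_{l+1}, x⃗_z, ỹ₂, x⃗_w]` (fresh variables `Nat.pair 0 _`). -/
def stepPremSub {S : Finset TGD} (p : LPath S) (l ystar vstar : ℕ) : ℕ → Term :=
  fun x =>
    if x = ystar then Term.var (ytil p (l + 1))
    else if x = vstar then Term.var (ytil p 2)
    else Term.var (Nat.pair 0 x)

/-- Substitution producing `H*[ỹ_{l+k+1}, x⃗_z, ỹ_{l+2}, x⃗_w]`. -/
def stepConcSub {S : Finset TGD} (p : LPath S) (l ystar vstar : ℕ) : ℕ → Term :=
  fun x =>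
    if x = ystar then Term.var (ytil p (p.len + 1))
    else if x = vstar then Term.var (ytil p (l + 2))
    else Term.var (Nat.pair 0 x)

/-- The composite path `p = 𝔭^a 𝔭^b` (with `𝔭^a` of length `l`) is step-propagating for
the edge `u* →_{ystar} vstar` whose tgd is `ρstar`. -/
def StepPropagating {S : Finset TGD} (p : LPath S) (l : ℕ) (ρstar : TGD)
    (ystar vstar : ℕ) : Prop :=
  DatalogEntails S
    (pathAtoms p ∪ { a | ∃ b ∈ ρstar.head, a = b.subst (stepPremSub p l ystar vstar) })
    { a | ∃ b ∈ ρstar.head, a = b.subst (stepConcSub p l ystar vstar) }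

/-- A labelled edge `(u, y, v)`, i.e. `u →_y v`. -/
abbrev EdgeSet := Set (ℕ × ℕ × ℕ)

def EdgeInC (S : Finset TGD) (C : Set ℕ) (e : ℕ × ℕ × ℕ) : Prop :=
  e.1 ∈ C ∧ e.2.2 ∈ C ∧ LEdge S e.1 e.2.1 e.2.2

/-- The strongly connected component `C` is `E`-saturating. -/
def ESaturating (S : Finset TGD) (C : Set ℕ) (E : EdgeSet) : Prop :=
  (∀ e ∈ E, EdgeInC S C e) ∧
  -- (1) C without the edges of E is acyclic
  (∀ v, ¬ Relation.TransGen
      (fun a b => a ∈ C ∧ b ∈ C ∧ ∃ y, LEdge S a y b ∧ (a, y, b) ∉ E) v v) ∧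
  -- (2) E-edges with a common target carry the same label
  (∀ u x v u' x', (u, x, v) ∈ E → (u', x', v) ∈ E → x = x') ∧
  -- (3) every path e𝔭 with e ∈ E and 𝔭 an Ē-path is base-propagating
  (∀ p : LPath S, 1 ≤ p.len →
    (∀ i ≤ p.len, p.vtx i ∈ C) →
    (p.vtx 0, p.lab 1, p.vtx 1) ∈ E →
    (∀ i, 2 ≤ i → i ≤ p.len → (p.vtx (i - 1), p.lab i, p.vtx i) ∉ E) →
    (∃ e ∈ E, e.1 = p.vtx p.len) →
    BasePropagating p) ∧
  -- (4) every path e^a 𝔭₁ e^b 𝔭₂ with e^a, e^b ∈ E and 𝔭₁, 𝔭₂ Ē-paths is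
  --     step-propagating for every e ∈ E
  (∀ p : LPath S, ∀ l, 1 ≤ l → l < p.len →
    (∀ i ≤ p.len, p.vtx i ∈ C) →
    (p.vtx 0, p.lab 1, p.vtx 1) ∈ E →
    (p.vtx l, p.lab (l + 1), p.vtx (l + 1)) ∈ E →
    (∀ i, 2 ≤ i → i ≤ l → (p.vtx (i - 1), p.lab i, p.vtx i) ∉ E) →
    (∀ i, l + 2 ≤ i → i ≤ p.len → (p.vtx (i - 1), p.lab i, p.vtx i) ∉ E) →
    (∃ e ∈ E, e.1 = p.vtx p.len) →
    ∀ e ∈ E, ∀ ρstar ∈ S, e.2.2 ∈ ρstar.exVars →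
      StepPropagating p l ρstar e.2.1 e.2.2)

/-- `S` is saturating: every strongly connected component of `ledgraph(S)` is
`E`-saturating for some `E`. -/
def Saturating (S : Finset TGD) : Prop :=
  ∀ v, LVertex S v → ∃ E : EdgeSet, ESaturating S (scc S v) E

/-- `λ(v)`: the labels of edges into `v` from within its own SCC. -/
def labelSet (S : Finset TGD) (v : ℕ) : Set ℕ := { x | ∃ u ∈ scc S v, LEdge S u x v }

/-- `conf(v)`. -/
noncomputable def conf (S : Finset TGD) (v : ℕ) : ℕ := (labelSet S v).ncard

/-- `conf(C)`. -/
noncomputable def confC (S : Finset TGD) (C : Set ℕ) : ℕ := sSup (conf S '' C)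

/-- `t` is a `C`-input of the chase. -/
def CInput {S : Finset TGD} {D : Set Atom} (cs : ChaseSeq S D) (C : Set ℕ) (t : Term) : Prop :=
  t ∈ chaseTerms cs ∧
    ((∃ c, t = Term.const c) ∨
     ∃ n v, t = Term.null n ∧ NullVar cs n v ∧ v ∉ C ∧ ∃ x w, w ∈ C ∧ LEdge S v x w)

/-- `m 0 → m 1 → ⋯ → m k` is a chain of chase edges all of whose nulls belong
(via `var`) to `C`. -/
def CChain {S : Finset TGD} {D : Set Atom} (cs : ChaseSeq S D) (C : Set ℕ)
    (k : ℕ) (m : ℕ → ℕ) : Prop :=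
  (∀ i ≤ k, ∃ v ∈ C, NullVar cs (m i) v) ∧
  (∀ i, 1 ≤ i → i ≤ k → ∃ x, ChaseEdge cs (Term.null (m (i - 1))) x (m i))

/-- The null `n` has `C`-depth at most `d`. -/
def CDepthLe {S : Finset TGD} {D : Set Atom} (cs : ChaseSeq S D) (C : Set ℕ)
    (n d : ℕ) : Prop :=
  (∃ v ∈ C, NullVar cs n v) ∧ ∀ k m, CChain cs C k m → m k = n → k ≤ d

/-- Vertices of SCCs that are direct `≺`-predecessors of `scc v`. -/
def InPred (S : Finset TGD) (v : ℕ) : Set ℕ :=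
  { u | LVertex S u ∧ u ∉ scc S v ∧ ∃ y w, w ∈ scc S v ∧ LEdge S u y w }

/-- Vertices of the SCCs in `𝒞_cxt` for `scc v` (w.r.t. the chosen edge sets `EC`). -/
def CxtPred (S : Finset TGD) (EC : ℕ → EdgeSet) (v : ℕ) : Set ℕ :=
  { u | ∃ v' w x y, v' ∈ scc S v ∧ w ∈ scc S v ∧ (w, x, v') ∈ EC v ∧
      LEdge S u y v' ∧ x ≠ y }

/-- A choice of edge sets `EC` (constant on SCCs, making every SCC saturating) and a
rank function (constant on SCCs) satisfying the defining equations of Definition 5.3. -/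
def RankSystem (S : Finset TGD) (EC : ℕ → EdgeSet) (rank : ℕ → ℕ) : Prop :=
  (∀ v, LVertex S v → ESaturating S (scc S v) (EC v)) ∧
  (∀ u v : ℕ, u ∈ scc S v → EC u = EC v) ∧
  (∀ u v : ℕ, u ∈ scc S v → rank u = rank v) ∧
  (∀ v, LVertex S v →
    rank v =
      if confC S (scc S v) = 0 then sSup (insert 0 (rank '' InPred S v))
      else if confC S (scc S v) = 1 then
        max (sSup (insert 0 (rank '' InPred S v)))
          (sSup (insert 0 (rank '' CxtPred S EC v)) + 1)
      else
        max (sSup (insert 0 (rank '' InPred S v)))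
          (sSup (insert 0 (rank '' CxtPred S EC v)) + 2))

/-- `k`-fold iterated exponential. -/
def iterExp : ℕ → ℕ → ℕ
  | 0, n => n
  | k + 1, n => 2 ^ iterExp k n

/-- `f` is a `k`-exponential function: bounded by the `k`-fold iterated exponential of a
polynomial (0-exponential means polynomial). -/
def KExpBounded (k : ℕ) (f : ℕ → ℕ) : Prop :=
  ∃ c e : ℕ, ∀ n, f n ≤ iterExp k (c * (n + 1) ^ e)

/-- `S` is arboreous (w.r.t. a rank system), with `scc S vhat` the unique SCC of maximal
rank and `conf` at most 1. -/
def Arboreous (S : Finset TGD) (EC : ℕ → EdgeSet) (rank : ℕ → ℕ) (vhat : ℕ) : Prop :=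
  RankSystem S EC rank ∧ LVertex S vhat ∧
  (∀ u, LVertex S u → rank u ≤ rank vhat) ∧
  (∀ u, LVertex S u → rank u = rank vhat → u ∈ scc S vhat) ∧
  confC S (scc S vhat) ≤ 1

/-- Edge `n ↠ m` of the null forest of `C`. -/
def NfEdge {S : Finset TGD} {D : Set Atom} (cs : ChaseSeq S D) (C : Set ℕ)
    (n m : ℕ) : Prop :=
  (∃ v ∈ C, NullVar cs n v) ∧ (∃ v ∈ C, NullVar cs m v) ∧
    ∃ x, ChaseEdge cs (Term.null n) x m

/-- `ρ` is an `Ê`-tgd: it has an existential variable that is the target of an `Ê`-edge. -/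
def IsETgd (Ehat : EdgeSet) (ρ : TGD) : Prop := ∃ e ∈ Ehat, e.2.2 ∈ ρ.exVars

/-- `V_Ê`: the existential variables in `C` occurring in some `Ê`-tgd. -/
def VEhat (S : Finset TGD) (C : Set ℕ) (Ehat : EdgeSet) : Set ℕ :=
  { v | v ∈ C ∧ ∃ ρ ∈ S, IsETgd Ehat ρ ∧ v ∈ ρ.exVars }

/-- `n` is a fresh null of chase step `i`. -/
def FreshAt {S : Finset TGD} {D : Set Atom} (cs : ChaseSeq S D) (i n : ℕ) : Prop :=
  ∃ st v, IntroducedAt cs n i st v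

/-- Step `i` applies an `Ê`-tgd. -/
def EStep {S : Finset TGD} {D : Set Atom} (cs : ChaseSeq S D) (Ehat : EdgeSet)
    (i : ℕ) : Prop :=
  ∃ st, cs.step i = some st ∧ IsETgd Ehat st.rule

/-- `N̂`: the nulls of variables in `C`. -/
def Nhat {S : Finset TGD} {D : Set Atom} (cs : ChaseSeq S D) (C : Set ℕ) : Set ℕ :=
  { n | ∃ v ∈ C, NullVar cs n v }

/-- `R̄`: nulls of `N̂` not introduced at any `Ê`-step. -/
def Rbar {S : Finset TGD} {D : Set Atom} (cs : ChaseSeq S D) (C : Set ℕ)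
    (Ehat : EdgeSet) : Set ℕ :=
  { n | n ∈ Nhat cs C ∧ ∀ i, EStep cs Ehat i → ¬ FreshAt cs i n }

/-- Membership in `F[i]`: the least set containing `R[i]` and closed under null-forest
edges into `R̄`. -/
inductive FsetMem {S : Finset TGD} {D : Set Atom} (cs : ChaseSeq S D) (C : Set ℕ)
    (Ehat : EdgeSet) (i : ℕ) : ℕ → Prop
  | base : ∀ {n}, FreshAt cs i n → FsetMem cs C Ehat i n
  | step : ∀ {n m}, FsetMem cs C Ehat i n → m ∈ Rbar cs C Ehat → NfEdge cs C n m →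
      FsetMem cs C Ehat i m

/-- `F[i]` as a set of terms. -/
def Fnode {S : Finset TGD} {D : Set Atom} (cs : ChaseSeq S D) (C : Set ℕ) (Ehat : EdgeSet)
    (i : ℕ) : Set Term :=
  { t | ∃ n, t = Term.null n ∧ FsetMem cs C Ehat i n }

/-- `𝓕`: the collection of the sets `F[i]` for `Ê`-steps `i`. -/
def Fcal {S : Finset TGD} {D : Set Atom} (cs : ChaseSeq S D) (C : Set ℕ)
    (Ehat : EdgeSet) : Set (Set Term) :=
  { X | ∃ i, EStep cs Ehat i ∧ X = Fnode cs C Ehat i }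

/-- `B₀`: all terms of the chase lying in no member of `𝓕`. -/
def B0 {S : Finset TGD} {D : Set Atom} (cs : ChaseSeq S D) (C : Set ℕ)
    (Ehat : EdgeSet) : Set Term :=
  { t | t ∈ chaseTerms cs ∧ ∀ X ∈ Fcal cs C Ehat, t ∉ X }

/-- The node set `N_∼` of the term tree. -/
def Nodes {S : Finset TGD} {D : Set Atom} (cs : ChaseSeq S D) (C : Set ℕ)
    (Ehat : EdgeSet) : Set (Set Term) :=
  insert (B0 cs C Ehat) (Fcal cs C Ehat)

/-- `F₁ ⇒ F₂` between members of `𝓕`. -/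
def FEdge0 {S : Finset TGD} {D : Set Atom} (cs : ChaseSeq S D) (C : Set ℕ) (Ehat : EdgeSet)
    (X Y : Set Term) : Prop :=
  X ∈ Fcal cs C Ehat ∧ Y ∈ Fcal cs C Ehat ∧ X ≠ Y ∧
    ∃ n m, Term.null n ∈ X ∧ Term.null m ∈ Y ∧ NfEdge cs C n m

/-- The edge relation `⇒` of the term tree (extended by edges from `B₀`). -/
def TEdge {S : Finset TGD} {D : Set Atom} (cs : ChaseSeq S D) (C : Set ℕ) (Ehat : EdgeSet)
    (X Y : Set Term) : Prop :=
  FEdge0 cs C Ehat X Y ∨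
    (X = B0 cs C Ehat ∧ Y ∈ Fcal cs C Ehat ∧ ∀ Z, ¬ FEdge0 cs C Ehat Z Y)

/-- `⇒*`. -/
def TReach {S : Finset TGD} {D : Set Atom} (cs : ChaseSeq S D) (C : Set ℕ)
    (Ehat : EdgeSet) : Set Term → Set Term → Prop :=
  Relation.ReflTransGen (TEdge cs C Ehat)

/-- The relation `⊴` on variables induced by a relation `R` on positions. -/
def TriRel (S : Finset TGD) (R : Pos → Pos → Prop) : ℕ → ℕ → Prop :=
  Relation.ReflTransGen (fun x y => ∃ ρ ∈ S, ∃ a ∈ ρ.body, ∃ i j : ℕ,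
    a.args[i]? = some (Term.var x) ∧ a.args[j]? = some (Term.var y) ∧
    R (a.pred, i) (a.pred, j))

/-- `R` satisfies the constraints (1)–(4) of Definition 6.4 on `⪯`. -/
def Admissible (S : Finset TGD) (C : Set ℕ) (Ehat : EdgeSet)
    (R : Pos → Pos → Prop) : Prop :=
  ∀ ρ ∈ S, ∀ a ∈ ρ.head, ∀ i j : ℕ, ∀ vi vj : ℕ,
    a.args[i]? = some (Term.var vi) → a.args[j]? = some (Term.var vj) →
    R (a.pred, i) (a.pred, j) →
      (¬ (vi ∈ ρ.exVars ∧ vi ∈ C ∧ vj ∈ ρ.exVars ∧ vj ∉ C)) ∧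
      (¬ (vi ∈ ρ.exVars ∧ vi ∈ VEhat S C Ehat ∧ vj ∈ ρ.frontier)) ∧
      (¬ (vi ∈ ρ.exVars ∧ vi ∈ C ∧ vj ∈ ρ.frontier ∧ vj ∉ labelSet S vi)) ∧
      (vi ∈ ρ.frontier → vj ∈ ρ.frontier → TriRel S R vi vj)

/-- `R` is the relation `⪯`: the largest relation satisfying constraints (1)–(4). -/
def IsPrecRel (S : Finset TGD) (C : Set ℕ) (Ehat : EdgeSet)
    (R : Pos → Pos → Prop) : Prop :=
  Admissible S C Ehat R ∧
    ∀ R' : Pos → Pos → Prop, Admissible S C Ehat R' → ∀ p q, R' p q → R p q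

/-- `Ω̂`: the `Ĉ`-affected positions. -/
def OmegaHat (S : Finset TGD) (C : Set ℕ) : Set Pos :=
  { pq | ∃ v ∈ C, ∃ ρ ∈ S, v ∈ ρ.exVars ∧ Omega S ρ v pq }

/-- The body variable `x` of `ρ` is `Ĉ`-affected. -/
def CAffected (S : Finset TGD) (C : Set ℕ) (ρ : TGD) (x : ℕ) : Prop :=
  x ∈ ρ.bodyVars ∧ ∀ pq ∈ posB ρ x, pq ∈ OmegaHat S C

/-- `S` is path-guarded (w.r.t. `Ĉ = C` and the relation `⊴` induced by `R = ⪯`). -/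
def PathGuarded (S : Finset TGD) (C : Set ℕ) (R : Pos → Pos → Prop) : Prop :=
  ∀ ρ ∈ S, ∀ x y : ℕ, CAffected S C ρ x → CAffected S C ρ y →
    TriRel S R x y ∨ TriRel S R y x

/-- The constants occurring in `S` and `D`. -/
def constsIn (S : Finset TGD) (D : Set Atom) : Set ℕ :=
  { c | (∃ a ∈ D, Term.const c ∈ a.args) ∨
        ∃ ρ ∈ S, ∃ a : Atom, (a ∈ ρ.body ∨ a ∈ ρ.head) ∧ Term.const c ∈ a.args }


/-! ### Auxiliary development for statement2 -/

section Aux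

open Classical

variable {S : Finset TGD} {D : Set Atom}

/-- Convenient accessor bundle for an applied step. -/
lemma app8 (cs : ChaseSeq S D) {i : ℕ} {st : Step} (h : cs.step i = some st) :
    st.rule ∈ S ∧
    BodyMatch (cs.seq i) st.rule st.m ∧
    ¬ MatchSatisfied (cs.seq i) st.rule st.m ∧
    (∀ x ∈ st.rule.bodyVars, st.mx x = st.m x) ∧
    (∀ v ∈ st.rule.exVars, ∃ n : ℕ, st.mx v = Term.null n ∧ Term.null n ∉ termsOf (cs.seq i)) ∧
    (∀ v ∈ st.rule.exVars, ∀ w ∈ st.rule.exVars, st.mx v = st.mx w → v = w) ∧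
    cs.seq (i + 1) = cs.seq i ∪ { a | ∃ b ∈ st.rule.head, a = b.subst st.mx } ∧
    (st.rule.exVars ≠ ∅ → ∀ ρ ∈ S, ρ.isDatalog → SatTGD (cs.seq i) ρ) :=
  cs.app i st h

lemma seq_succ_subset (cs : ChaseSeq S D) (i : ℕ) : cs.seq i ⊆ cs.seq (i + 1) := by
  cases h : cs.step i with
  | none => rw [(cs.halt i h).1]
  | some st => rw [(app8 cs h).2.2.2.2.2.2.1]; exact Set.subset_union_left

lemma seq_mono (cs : ChaseSeq S D) {i j : ℕ} (h : i ≤ j) : cs.seq i ⊆ cs.seq j := by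
  induction h with
  | refl => exact subset_rfl
  | step _ ih => exact ih.trans (seq_succ_subset cs _)

lemma seq_subset_chase (cs : ChaseSeq S D) (i : ℕ) : cs.seq i ⊆ chase cs :=
  Set.subset_iUnion cs.seq i

lemma termsOf_mono {I J : Set Atom} (h : I ⊆ J) : termsOf I ⊆ termsOf J := by
  rintro t ⟨a, ha, hta⟩; exact ⟨a, h ha, hta⟩

lemma bodyVar_term_mem (cs : ChaseSeq S D) {i : ℕ} {st : Step}
    (h : cs.step i = some st) {x : ℕ} (hx : x ∈ st.rule.bodyVars) :
    st.m x ∈ termsOf (cs.seq i) := by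
  obtain ⟨a, ha, hxa⟩ := hx
  refine ⟨a.subst st.m, (app8 cs h).2.1.2 a ha, ?_⟩
  exact List.mem_map.mpr ⟨Term.var x, hxa, rfl⟩

lemma introduced_mem_next (cs : ChaseSeq S D) {n i : ℕ} {st : Step} {v : ℕ}
    (h : IntroducedAt cs n i st v) : Term.null n ∈ termsOf (cs.seq (i + 1)) := by
  obtain ⟨hstep, hv, hmx⟩ := h
  obtain ⟨b, hb, hvb⟩ := hv.1
  refine ⟨b.subst st.mx, ?_, ?_⟩
  · rw [(app8 cs hstep).2.2.2.2.2.2.1]; exact Or.inr ⟨b, hb, rfl⟩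
  · rw [← hmx]
    exact List.mem_map.mpr ⟨Term.var v, hvb, rfl⟩

lemma introducedAt_fresh (cs : ChaseSeq S D) {n i : ℕ} {st : Step} {v : ℕ}
    (h : IntroducedAt cs n i st v) : Term.null n ∉ termsOf (cs.seq i) := by
  obtain ⟨hstep, hv, hmx⟩ := h
  obtain ⟨n', hn', hfresh⟩ := (app8 cs hstep).2.2.2.2.1 v hv
  rw [hmx] at hn'
  cases hn'
  exact hfresh

lemma introducedAt_eq (cs : ChaseSeq S D) {n i i' : ℕ} {st st' : Step} {v v' : ℕ}
    (h : IntroducedAt cs n i st v) (h' : IntroducedAt cs n i' st' v') :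
    i = i' ∧ st = st' ∧ v = v' := by
  have hii : i = i' := by
    rcases lt_trichotomy i i' with hlt | he | hgt
    · exact absurd (termsOf_mono (seq_mono cs hlt) (introduced_mem_next cs h))
        (introducedAt_fresh cs h')
    · exact he
    · exact absurd (termsOf_mono (seq_mono cs hgt) (introduced_mem_next cs h'))
        (introducedAt_fresh cs h)
  subst hii
  have hst : st = st' := by
    have := h.1; rw [h'.1] at this; exact (Option.some.inj this).symm
  subst hst
  refine ⟨rfl, rfl, ?_⟩
  exact (app8 cs h.1).2.2.2.2.2.1 v h.2.1 v' h'.2.1 (h.2.2.trans h'.2.2.symm)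

/-! #### Syntactic finiteness -/

lemma Atom.vars_finite (a : Atom) : a.vars.Finite := by
  have hsub : a.vars ⊆ (fun t => match t with | Term.var x => x | _ => 0) '' {t | t ∈ a.args} := by
    intro x hx; exact ⟨Term.var x, hx, rfl⟩
  exact ((a.args.finite_toSet).image _).subset hsub

lemma TGD.headVars_finite (ρ : TGD) : ρ.headVars.Finite := by
  have : ρ.headVars = ⋃ a ∈ (ρ.head : Set Atom), a.vars := by
    ext x; simp [TGD.headVars]
  rw [this]
  exact Set.Finite.biUnion (ρ.head.finite_toSet) (fun a _ => Atom.vars_finite a)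

lemma TGD.bodyVars_finite (ρ : TGD) : ρ.bodyVars.Finite := by
  have : ρ.bodyVars = ⋃ a ∈ (ρ.body : Set Atom), a.vars := by
    ext x; simp [TGD.bodyVars]
  rw [this]
  exact Set.Finite.biUnion (ρ.body.finite_toSet) (fun a _ => Atom.vars_finite a)

lemma TGD.frontier_finite (ρ : TGD) : ρ.frontier.Finite :=
  (TGD.bodyVars_finite ρ).subset Set.inter_subset_left

/-- The terms occurring (in bodies or heads) in `S`. -/
def STerms (S : Finset TGD) : Set Term :=
  { t | ∃ ρ ∈ S, ∃ a : Atom, (a ∈ ρ.body ∨ a ∈ ρ.head) ∧ t ∈ a.args }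

lemma STerms_finite (S : Finset TGD) : (STerms S).Finite := by
  have : STerms S = ⋃ ρ ∈ (S : Set TGD), ⋃ a ∈ ((ρ.body ∪ ρ.head : Finset Atom) : Set Atom),
      {t | t ∈ a.args} := by
    ext t
    simp only [STerms, Set.mem_setOf_eq, Set.mem_iUnion, Finset.coe_union, Set.mem_union,
      Finset.mem_coe, exists_prop]
  rw [this]
  exact Set.Finite.biUnion S.finite_toSet
    (fun ρ _ => Set.Finite.biUnion (ρ.body ∪ ρ.head).finite_toSet
      (fun a _ => a.args.finite_toSet))

lemma termsOf_finite {I : Set Atom} (h : I.Finite) : (termsOf I).Finite := by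
  have : termsOf I = ⋃ a ∈ I, {t | t ∈ a.args} := by
    ext t; simp [termsOf]
  rw [this]
  exact Set.Finite.biUnion h (fun a _ => a.args.finite_toSet)

lemma constsIn_finite (S : Finset TGD) (D : Set Atom) (hD : D.Finite) :
    (constsIn S D).Finite := by
  have hsub : constsIn S D ⊆
      (fun t => match t with | Term.const c => c | _ => 0) '' (termsOf D ∪ STerms S) := by
    rintro c (⟨a, ha, hc⟩ | ⟨ρ, hρ, a, ha, hc⟩)
    · exact ⟨Term.const c, Or.inl ⟨a, ha, hc⟩, rfl⟩
    · exact ⟨Term.const c, Or.inr ⟨ρ, hρ, a, ha, hc⟩, rfl⟩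
  exact (((termsOf_finite hD).union (STerms_finite S)).image _).subset hsub

/-- The nulls occurring literally in heads of tgds of `S`. -/
def headNulls (S : Finset TGD) : Set ℕ :=
  { n | ∃ ρ ∈ S, ∃ a ∈ ρ.head, Term.null n ∈ a.args }

lemma headNulls_finite (S : Finset TGD) : (headNulls S).Finite := by
  have hsub : headNulls S ⊆
      (fun t => match t with | Term.null n => n | _ => 0) '' STerms S := by
    rintro n ⟨ρ, hρ, a, ha, hn⟩
    exact ⟨Term.null n, ⟨ρ, hρ, a, Or.inr ha, hn⟩, rfl⟩
  exact ((STerms_finite S).image _).subset hsub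

lemma lVertex_finite (S : Finset TGD) : {v | LVertex S v}.Finite := by
  have hsub : {v | LVertex S v} ⊆ ⋃ ρ ∈ (S : Set TGD), ρ.headVars := by
    rintro v ⟨ρ, hρ, hv⟩
    exact Set.mem_biUnion hρ hv.1
  exact (Set.Finite.biUnion S.finite_toSet (fun ρ _ => TGD.headVars_finite ρ)).subset hsub

/-- Every term of the chase is a constant of `S`/`D`, a literal head null,
or an introduced null. -/
lemma goodTerm (cs : ChaseSeq S D) (hD : IsDatabase D) :
    ∀ i, ∀ t ∈ termsOf (cs.seq i),
      (∃ c, t = Term.const c ∧ c ∈ constsIn S D) ∨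
      (∃ n, t = Term.null n ∧ (n ∈ headNulls S ∨ ∃ i' st v, IntroducedAt cs n i' st v)) := by
  intro i
  induction i with
  | zero =>
    rw [cs.init]
    rintro t ⟨a, ha, hta⟩
    obtain ⟨c, rfl⟩ := hD.2 a ha t hta
    exact Or.inl ⟨c, rfl, Or.inl ⟨a, ha, hta⟩⟩
  | succ i ih =>
    cases hst : cs.step i with
    | none => rw [(cs.halt i hst).1]; exact ih
    | some st =>
      have happ := app8 cs hst
      rintro t ⟨a, ha, hta⟩
      rw [happ.2.2.2.2.2.2.1] at ha
      rcases ha with ha | ⟨b, hb, rfl⟩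
      · exact ih t ⟨a, ha, hta⟩
      · obtain ⟨u, hu, rfl⟩ := List.mem_map.mp hta
        cases u with
        | const c => exact Or.inl ⟨c, rfl, Or.inr ⟨st.rule, happ.1, b, Or.inr hb, hu⟩⟩
        | null k => exact Or.inr ⟨k, rfl, Or.inl ⟨st.rule, happ.1, b, hb, hu⟩⟩
        | var x =>
          have hxh : x ∈ st.rule.headVars := ⟨b, hb, hu⟩
          have hsub : Term.subst st.mx (Term.var x) = st.mx x := rfl
          rw [hsub]
          by_cases hxb : x ∈ st.rule.bodyVars
          · rw [happ.2.2.2.1 x hxb]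
            exact ih _ (bodyVar_term_mem cs hst hxb)
          · have hex : x ∈ st.rule.exVars := ⟨hxh, hxb⟩
            obtain ⟨n, hn, _⟩ := happ.2.2.2.2.1 x hex
            exact Or.inr ⟨n, hn, Or.inr ⟨i, st, x, hst, hex, hn⟩⟩

/-- Key occurrence lemma: an introduced null that is not a literal head null only
occurs at positions in `Ω_{var n}`. -/
lemma occurrences_in_Omega (cs : ChaseSeq S D) (hD : IsDatabase D)
    {n i0 : ℕ} {st0 : Step} {v : ℕ} (hin : IntroducedAt cs n i0 st0 v)
    (hn : n ∉ headNulls S) :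
    ∀ j, ∀ a ∈ cs.seq j, ∀ k : ℕ, a.args[k]? = some (Term.null n) →
      Omega S st0.rule v (a.pred, k) := by
  intro j
  induction j with
  | zero =>
    rw [cs.init]
    intro a ha k hk
    obtain ⟨c, hc⟩ := hD.2 a ha _ (List.mem_of_getElem? hk)
    cases hc
  | succ j ih =>
    cases hst : cs.step j with
    | none => rw [(cs.halt j hst).1]; exact ih
    | some st =>
      have happ := app8 cs hst
      intro a ha k hk
      rw [happ.2.2.2.2.2.2.1] at ha
      rcases ha with ha | ⟨b, hb, rfl⟩
      · exact ih a ha k hk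
      · have hk' : (b.args.map (Term.subst st.mx))[k]? = some (Term.null n) := hk
        rw [List.getElem?_map] at hk'
        obtain ⟨u, hu, husub⟩ := Option.map_eq_some_iff.mp hk'
        cases u with
        | const c => simp [Term.subst] at husub
        | null n' =>
          simp only [Term.subst, Term.null.injEq] at husub
          subst husub
          exact absurd ⟨st.rule, happ.1, b, hb, List.mem_of_getElem? hu⟩ hn
        | var x =>
          have hmx : st.mx x = Term.null n := husub
          have hxh : x ∈ st.rule.headVars := ⟨b, hb, List.mem_of_getElem? hu⟩
          by_cases hxb : x ∈ st.rule.bodyVars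
          · have hmxm : st.m x = Term.null n := by rw [← happ.2.2.2.1 x hxb]; exact hmx
            have hposB : ∀ pq ∈ posB st.rule x, Omega S st0.rule v pq := by
              rintro ⟨p, q⟩ ⟨a', ha', hpred, hget⟩
              have hmem : a'.subst st.m ∈ cs.seq j := happ.2.1.2 a' ha'
              have hget' : (a'.subst st.m).args[q]? = some (Term.null n) := by
                show (a'.args.map (Term.subst st.m))[q]? = _
                rw [List.getElem?_map, hget]
                simp [Term.subst, hmxm]
              have hom := ih _ hmem q hget'
              simpa [Atom.subst, hpred] using hom
            exact Omega.step happ.1 hxb hposB ⟨b, hb, rfl, hu⟩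
          · have hex : x ∈ st.rule.exVars := ⟨hxh, hxb⟩
            have hintro : IntroducedAt cs n j st x := ⟨hst, hex, hmx⟩
            obtain ⟨hj, hst0, hv⟩ := introducedAt_eq cs hintro hin
            subst hst0; subst hv
            exact Omega.base ⟨b, hb, rfl, hu⟩

/-- A chase edge between (non-literal) introduced nulls projects to an edge of
`ledgraph(S)`. -/
lemma ledge_of_edge (cs : ChaseSeq S D) (hD : IsDatabase D) {n m i i' : ℕ}
    {st st' : Step} {v u y : ℕ}
    (hn : IntroducedAt cs n i st v) (hm : IntroducedAt cs m i' st' u)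
    (hmL : m ∉ headNulls S) (hy : y ∈ st.rule.frontier) (hmy : st.m y = Term.null m) :
    LEdge S u y v := by
  refine ⟨st'.rule, (app8 cs hm.1).1, st.rule, (app8 cs hn.1).1, hm.2.1, hn.2.1, hy, ?_⟩
  rintro ⟨p, q⟩ ⟨a', ha', hpred, hget⟩
  have hmem : a'.subst st.m ∈ cs.seq i := (app8 cs hn.1).2.1.2 a' ha'
  have hget' : (a'.subst st.m).args[q]? = some (Term.null m) := by
    show (a'.args.map (Term.subst st.m))[q]? = _
    rw [List.getElem?_map, hget]
    simp [Term.subst, hmy]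
  have hom := occurrences_in_Omega cs hD hm hmL i _ hmem q hget'
  simpa [Atom.subst, hpred] using hom

/-- The (finite) vertex set of `ledgraph(S)` as a `Finset`. -/
noncomputable def Vfin (S : Finset TGD) : Finset ℕ := (lVertex_finite S).toFinset

/-- Height of a vertex in the acyclic graph `ledgraph(S)`. -/
noncomputable def hgt (S : Finset TGD) (v : ℕ) : ℕ :=
  ((Vfin S).filter (fun u => Relation.TransGen (LEdgeAny S) u v)).card

lemma hgt_le (S : Finset TGD) (v : ℕ) : hgt S v ≤ (Vfin S).card :=
  Finset.card_filter_le _ _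

lemma hgt_lt (hacyc : LAcyclic S) {u y w : ℕ} (h : LEdge S u y w) :
    hgt S u < hgt S w := by
  obtain ⟨ρv, hρv, ρw, hρw, hu, hw, _, _⟩ := h
  have huV : u ∈ Vfin S := by
    rw [Vfin, Set.Finite.mem_toFinset]; exact ⟨ρv, hρv, hu⟩
  have hsub : (Vfin S).filter (fun a => Relation.TransGen (LEdgeAny S) a u) ⊆
      (Vfin S).filter (fun a => Relation.TransGen (LEdgeAny S) a w) := by
    intro a ha
    rw [Finset.mem_filter] at ha ⊢
    exact ⟨ha.1, Relation.TransGen.tail ha.2 ⟨y, ρv, hρv, ρw, hρw, hu, hw, ‹_›, ‹_›⟩⟩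
  refine Finset.card_lt_card ((Finset.ssubset_iff_of_subset hsub).mpr ⟨u, ?_, ?_⟩)
  · rw [Finset.mem_filter]
    exact ⟨huV, Relation.TransGen.single ⟨y, ρv, hρv, ρw, hρw, hu, hw, ‹_›, ‹_›⟩⟩
  · rw [Finset.mem_filter]
    rintro ⟨-, hcyc⟩
    exact hacyc u hcyc

/-- A tgd with one frontier valuation can fire at most once. -/
lemma fired_once (cs : ChaseSeq S D) {i j : ℕ} {st st' : Step} (hij : i < j)
    (hi : cs.step i = some st) (hj : cs.step j = some st')
    (hr : st.rule = st'.rule) (hfr : ∀ y ∈ st'.rule.frontier, st.m y = st'.m y) :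
    False := by
  have happi := app8 cs hi
  have happj := app8 cs hj
  apply happj.2.2.1
  refine ⟨fun x => if x ∈ st'.rule.exVars then st.mx x else st'.m x, ?_, ?_, ?_⟩
  · intro x z
    by_cases hx : x ∈ st'.rule.exVars
    · simp only [if_pos hx]
      obtain ⟨n, hn, -⟩ := happi.2.2.2.2.1 x (hr ▸ hx)
      rw [hn]; intro hc; cases hc
    · simp only [if_neg hx]
      exact happj.2.1.1 x z
  · intro x hx
    have : x ∉ st'.rule.exVars := fun hc => hc.2 hx
    simp [this]
  · intro a ha
    have hkey : a.subst (fun x => if x ∈ st'.rule.exVars then st.mx x else st'.m x)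
        = a.subst st.mx := by
      show Atom.mk a.pred _ = Atom.mk a.pred _
      congr 1
      apply List.map_congr_left
      intro t ht
      cases t with
      | const c => rfl
      | null k => rfl
      | var x =>
        show (if x ∈ st'.rule.exVars then st.mx x else st'.m x) = st.mx x
        by_cases hx : x ∈ st'.rule.exVars
        · simp [hx]
        · have hxh : x ∈ st'.rule.headVars := ⟨a, ha, ht⟩
          have hxb : x ∈ st'.rule.bodyVars := by
            by_contra hc; exact hx ⟨hxh, hc⟩
          have hxf : x ∈ st'.rule.frontier := ⟨hxb, hxh⟩
          simp only [if_neg hx]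
          rw [← hfr x hxf]
          exact (happi.2.2.2.1 x (hr ▸ hxb)).symm
    rw [hkey]
    have hmem : a.subst st.mx ∈ cs.seq (i + 1) := by
      rw [happi.2.2.2.2.2.2.1]
      exact Or.inr ⟨a, hr ▸ ha, rfl⟩
    exact seq_mono cs hij hmem

/-- A list enumerating the frontier variables of a tgd. -/
noncomputable def flist (ρ : TGD) : List ℕ := (TGD.frontier_finite ρ).toFinset.toList

lemma mem_flist {ρ : TGD} {y : ℕ} : y ∈ flist ρ ↔ y ∈ ρ.frontier := by
  simp [flist]

/-- Finiteness of lists of bounded length over a finite set. -/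
lemma finite_lists {α : Type} {T : Set α} (hT : T.Finite) (A : ℕ) :
    {l : List α | l.length ≤ A ∧ ∀ t ∈ l, t ∈ T}.Finite := by
  induction A with
  | zero =>
    apply Set.Finite.subset (Set.finite_singleton ([] : List α))
    rintro l ⟨hl, -⟩
    simp only [Nat.le_zero, List.length_eq_zero_iff] at hl
    simp [hl]
  | succ A ih =>
    apply Set.Finite.subset ((Set.finite_singleton ([] : List α)).union
      (Set.Finite.image2 List.cons hT ih))
    rintro l ⟨hl, he⟩
    cases l with
    | nil => exact Or.inl rfl
    | cons a l =>
      refine Or.inr ⟨a, he a List.mem_cons_self, l,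
        ⟨Nat.succ_le_succ_iff.mp hl, fun t ht => he t (List.mem_cons_of_mem a ht)⟩, rfl⟩

/-- The tag of an introduced null: the applied tgd, the values of its frontier
variables, and the existential variable of the null. -/
noncomputable def tagOf (cs : ChaseSeq S D) (n : ℕ) : TGD × List Term × ℕ :=
  if h : ∃ x : ℕ × Step × ℕ, IntroducedAt cs n x.1 x.2.1 x.2.2 then
    (h.choose.2.1.rule, (flist h.choose.2.1.rule).map h.choose.2.1.m, h.choose.2.2)
  else (⟨∅, ∅⟩, [], 0)

lemma tagOf_eq (cs : ChaseSeq S D) {n i : ℕ} {st : Step} {v : ℕ}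
    (h : IntroducedAt cs n i st v) :
    tagOf cs n = (st.rule, (flist st.rule).map st.m, v) := by
  have hex : ∃ x : ℕ × Step × ℕ, IntroducedAt cs n x.1 x.2.1 x.2.2 := ⟨(i, st, v), h⟩
  rw [tagOf, dif_pos hex]
  obtain ⟨-, hst, hv⟩ := introducedAt_eq cs hex.choose_spec h
  rw [hst, hv]

lemma tag_inj (cs : ChaseSeq S D) {n₁ n₂ i₁ i₂ : ℕ} {st₁ st₂ : Step} {v₁ v₂ : ℕ}
    (h1 : IntroducedAt cs n₁ i₁ st₁ v₁) (h2 : IntroducedAt cs n₂ i₂ st₂ v₂)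
    (he : tagOf cs n₁ = tagOf cs n₂) : n₁ = n₂ := by
  rw [tagOf_eq cs h1, tagOf_eq cs h2] at he
  obtain ⟨hrule, hlist, hv⟩ : st₁.rule = st₂.rule ∧
      (flist st₁.rule).map st₁.m = (flist st₂.rule).map st₂.m ∧ v₁ = v₂ := by
    refine ⟨congrArg Prod.fst he, ?_, ?_⟩
    · have := congrArg (fun p => p.2.1) he; exact this
    · have := congrArg (fun p => p.2.2) he; exact this
  have hfr : ∀ y ∈ st₂.rule.frontier, st₁.m y = st₂.m y := by
    intro y hy
    rw [hrule] at hlist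
    have hy' : y ∈ flist st₂.rule := mem_flist.mpr hy
    exact List.map_inj_left.mp hlist y hy'
  rcases lt_trichotomy i₁ i₂ with hlt | heq | hgt
  · exact absurd (fired_once cs hlt h1.1 h2.1 hrule hfr) (fun h => h)
  · subst heq
    have hst : st₁ = st₂ := by
      have := h1.1; rw [h2.1] at this; exact (Option.some.inj this).symm
    subst hst
    have : st₁.mx v₁ = st₁.mx v₂ := by rw [hv]
    rw [h1.2.2, h2.2.2] at this
    exact Term.null.inj this
  · exact absurd (fired_once cs hgt h2.1 h1.1 hrule.symm
      (fun y hy => (hfr y (hrule.symm ▸ hy)).symm)) (fun h => h)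

/-- Introduced non-literal nulls whose existential variable has height `< k`. -/
def NullsBelow (cs : ChaseSeq S D) (k : ℕ) : Set ℕ :=
  { n | n ∉ headNulls S ∧ ∃ i st v, IntroducedAt cs n i st v ∧ hgt S v < k }

lemma nullsBelow_finite (cs : ChaseSeq S D) (hD : IsDatabase D) (hacyc : LAcyclic S) :
    ∀ k, (NullsBelow cs k).Finite := by
  intro k
  induction k with
  | zero =>
    convert Set.finite_empty
    ext n; simp [NullsBelow]
  | succ k ih =>
    -- target set
    set Tk : Set Term :=
      (Term.const '' constsIn S D) ∪ (Term.null '' headNulls S) ∪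
        (Term.null '' NullsBelow cs k) with hTk
    have hTkfin : Tk.Finite :=
      (((constsIn_finite S D hD.1).image _).union ((headNulls_finite S).image _)).union
        (ih.image _)
    set A : ℕ := S.sup (fun ρ => (flist ρ).length) with hA
    have htarget : ((↑S : Set TGD) ×ˢ
        ({l : List Term | l.length ≤ A ∧ ∀ t ∈ l, t ∈ Tk} ×ˢ (↑(Vfin S) : Set ℕ))).Finite :=
      S.finite_toSet.prod ((finite_lists hTkfin A).prod (Vfin S).finite_toSet)
    refine Set.Finite.of_finite_image (f := tagOf cs) (htarget.subset ?_) ?_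
    · rintro p ⟨n, hn, rfl⟩
      obtain ⟨hnL, i, st, v, hintro, hv⟩ := hn
      rw [tagOf_eq cs hintro]
      refine ⟨(app8 cs hintro.1).1, ⟨?_, ?_⟩, ?_⟩
      · rw [List.length_map, hA]
        exact Finset.le_sup (f := fun ρ => (flist ρ).length) (app8 cs hintro.1).1
      · rintro t ht
        obtain ⟨y, hy, rfl⟩ := List.mem_map.mp ht
        have hyf : y ∈ st.rule.frontier := mem_flist.mp hy
        have hterm := goodTerm cs hD i _ (bodyVar_term_mem cs hintro.1 hyf.1)
        rcases hterm with ⟨c, hc, hcc⟩ | ⟨m, hm, hmi⟩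
        · exact Or.inl (Or.inl ⟨c, hcc, hc.symm⟩)
        · rcases hmi with hmh | ⟨i', st', u, hmu⟩
          · exact Or.inl (Or.inr ⟨m, hmh, hm.symm⟩)
          · by_cases hmL : m ∈ headNulls S
            · exact Or.inl (Or.inr ⟨m, hmL, hm.symm⟩)
            · have hedge : LEdge S u y v := ledge_of_edge cs hD hintro hmu hmL hyf hm
              exact Or.inr ⟨m, ⟨hmL, i', st', u, hmu,
                lt_of_lt_of_le (hgt_lt hacyc hedge) (Nat.lt_succ_iff.mp hv)⟩, hm.symm⟩
      · show v ∈ (↑(Vfin S) : Set ℕ)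
        rw [Finset.mem_coe, Vfin, Set.Finite.mem_toFinset]
        exact ⟨st.rule, (app8 cs hintro.1).1, hintro.2.1⟩
    · rintro n₁ hn₁ n₂ hn₂ he
      obtain ⟨-, i₁, st₁, v₁, h1, -⟩ := hn₁
      obtain ⟨-, i₂, st₂, v₂, h2, -⟩ := hn₂
      exact tag_inj cs h1 h2 he

lemma chaseTerms_finite (cs : ChaseSeq S D) (hD : IsDatabase D) (hacyc : LAcyclic S) :
    (chaseTerms cs).Finite := by
  have hsub : chaseTerms cs ⊆
      (Term.const '' constsIn S D) ∪ (Term.null '' headNulls S) ∪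
        (Term.null '' NullsBelow cs ((Vfin S).card + 1)) := by
    rintro t ⟨a, ha, hta⟩
    obtain ⟨i, hi⟩ := Set.mem_iUnion.mp ha
    rcases goodTerm cs hD i t ⟨a, hi, hta⟩ with ⟨c, rfl, hc⟩ | ⟨n, rfl, hn⟩
    · exact Or.inl (Or.inl ⟨c, hc, rfl⟩)
    · rcases hn with hn | ⟨i', st, v, hv⟩
      · exact Or.inl (Or.inr ⟨n, hn, rfl⟩)
      · by_cases hnL : n ∈ headNulls S
        · exact Or.inl (Or.inr ⟨n, hnL, rfl⟩)
        · exact Or.inr ⟨n, ⟨hnL, i', st, v, hv, Nat.lt_succ_of_le (hgt_le S v)⟩, rfl⟩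
  exact ((((constsIn_finite S D hD.1).image _).union ((headNulls_finite S).image _)).union
    ((nullsBelow_finite cs hD hacyc _).image _)).subset hsub

/-- Every chase atom has the predicate and arity of an atom of `D` or of a head of `S`. -/
lemma shape_mem (cs : ChaseSeq S D) :
    ∀ i, ∀ a ∈ cs.seq i, ∃ b : Atom, (b ∈ D ∨ ∃ ρ ∈ S, b ∈ ρ.head) ∧
      a.pred = b.pred ∧ a.args.length = b.args.length := by
  intro i
  induction i with
  | zero => rw [cs.init]; intro a ha; exact ⟨a, Or.inl ha, rfl, rfl⟩
  | succ i ih =>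
    cases hst : cs.step i with
    | none => rw [(cs.halt i hst).1]; exact ih
    | some st =>
      intro a ha
      rw [(app8 cs hst).2.2.2.2.2.2.1] at ha
      rcases ha with ha | ⟨b, hb, rfl⟩
      · exact ih a ha
      · exact ⟨b, Or.inr ⟨st.rule, (app8 cs hst).1, hb⟩, rfl, by simp [Atom.subst]⟩

end Aux

/-- if the labelled existential dependency graph `ledgraph(Σ)` is acyclic,
then `Chase(Σ,D)` is finite for every database `D`. -/
theorem statement2 (S : Finset TGD) (hra : RenamedApart S) (hacyc : LAcyclic S)
    (D : Set Atom) (hD : IsDatabase D) (cs : ChaseSeq S D) :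
    (chase cs).Finite := by
  classical
  have hTfin := chaseTerms_finite cs hD hacyc
  have hheads : {b : Atom | b ∈ D ∨ ∃ ρ ∈ S, b ∈ ρ.head}.Finite := by
    have heq : {b : Atom | b ∈ D ∨ ∃ ρ ∈ S, b ∈ ρ.head}
        = D ∪ ⋃ ρ ∈ (S : Set TGD), (ρ.head : Set Atom) := by
      ext b; simp
    rw [heq]
    exact hD.1.union (Set.Finite.biUnion S.finite_toSet (fun ρ _ => ρ.head.finite_toSet))
  set A : ℕ := hheads.toFinset.sup (fun b => b.args.length) with hA
  have hinj : Set.InjOn (fun a : Atom => (a.pred, a.args)) (chase cs) := by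
    rintro ⟨p₁, l₁⟩ - ⟨p₂, l₂⟩ - hab
    simp only [Prod.mk.injEq] at hab
    simp [hab.1, hab.2]
  refine Set.Finite.of_finite_image (Set.Finite.subset
    ((hheads.image Atom.pred).prod (finite_lists hTfin A)) ?_) hinj
  rintro p ⟨a, ha, rfl⟩
  obtain ⟨i, hi⟩ := Set.mem_iUnion.mp ha
  obtain ⟨b, hbmem, hpred, hlen⟩ := shape_mem cs i a hi
  refine ⟨⟨b, hbmem, hpred.symm⟩, ?_, ?_⟩
  · show a.args.length ≤ A
    rw [hlen, hA]
    exact Finset.le_sup (f := fun b : Atom => b.args.length)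
      (hheads.mem_toFinset.mpr hbmem)
  · intro t ht
    exact ⟨a, ha, ht⟩

end ChasePaper
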